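/- arXiv:1706.09607 — 2 statements merged into one kernel-verified Lean document; each statement's English description precedes it below -/
import Mathlib

section
/- If a sensing matrix A satisfies the RIP of order k+b+1 with δ_{k+b+1} < 1/√(k−g+1), where x is k-sparse with support T, |T| = k, and T₀ is a prior support with |T∩T₀| = g < k and |T₀\T| = b, then the OMP algorithm initialized with Λ₀ = T₀ selects only indices in T\T₀ during its first k−g iterations applied to y = Ax, and after k−g iterations exactly recovers x. -/
open scoped BigOperators

/-- `A` satisfies the restricted isometry property of order `k` with constant `δ`. -/
def RIP {m n : ℕ} (A : Matrix (Fin m) (Fin n) ℝ) (k : ℕ) (δ : ℝ) : Prop :=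
  ∀ x : Fin n → ℝ, (∃ S : Finset (Fin n), S.card ≤ k ∧ ∀ i ∉ S, x i = 0) →
    (1 - δ) * (∑ i, x i ^ 2) ≤ (∑ i, (A.mulVec x) i ^ 2) ∧
    (∑ i, (A.mulVec x) i ^ 2) ≤ (1 + δ) * (∑ i, x i ^ 2)

/-!
Let `v = x - xe t` be the current error: the residual is `A v`, and the correlations
`c = Aᵀ A v` vanish on `Λ t`. While `T ⊄ Λ t`, `‖A v‖² = ⟪v, c⟫ ≤ L |c j|` with
`L = ∑ i ∈ T \ Λ t, |v i|` and `j` the selected index, so `c j ≠ 0` and `j ∉ Λ t`.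
If moreover `j ∉ T`, take `w = v - L sign (c j) • e j`: then `⟪v, w⟫ = ‖v‖²`, `⟪A v, A w⟫ ≤ 0`
and, by Cauchy–Schwarz, `‖w‖² = ‖v‖² + L² ≤ (k - g + 1) ‖v‖²`, so the polarized RIP forces
`δ √(k - g + 1) ≥ 1`. Thus each step adds a new index of `T`; after `k - g` steps `T ⊆ Λ`, and
the normal equations with the lower RIP bound give `xe = x`.
-/

open Finset Matrix

section Sparse

variable {ι : Type*} [Fintype ι]

theorem dotProduct_eq_sum_sdiff [DecidableEq ι] {S Λ : Finset ι} {u c : ι → ℝ}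
    (hu : ∀ i ∉ S ∪ Λ, u i = 0) (hc : ∀ i ∈ Λ, c i = 0) :
    u ⬝ᵥ c = ∑ i ∈ S \ Λ, u i * c i := by
  refine (sum_subset (subset_univ _) fun i _ hi => ?_).symm
  by_cases hiΛ : i ∈ Λ
  · rw [hc i hiΛ, mul_zero]
  · rw [hu i (by simp_all), zero_mul]

theorem sq_sum_abs_le_card_mul_dotProduct (s : Finset ι) (u : ι → ℝ) :
    (∑ i ∈ s, |u i|) ^ 2 ≤ #s * (u ⬝ᵥ u) := by
  refine sq_sum_le_card_mul_sum_sq.trans (mul_le_mul_of_nonneg_left ?_ (Nat.cast_nonneg _))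
  simp only [sq_abs, dotProduct, ← sq]
  exact sum_le_sum_of_subset_of_nonneg (subset_univ _) fun i _ _ => sq_nonneg _

theorem mulVec_dotProduct_mulVec {κ : Type*} [Fintype κ] (A : Matrix κ ι ℝ) (u w : ι → ℝ) :
    (A *ᵥ u) ⬝ᵥ (A *ᵥ w) = (Aᵀ *ᵥ (A *ᵥ u)) ⬝ᵥ w := by
  rw [dotProduct_mulVec, mulVec_transpose]

end Sparse

namespace RIP

variable {m n K : ℕ} {A : Matrix (Fin m) (Fin n) ℝ} {δ : ℝ}

theorem dotProduct_bounds (h : RIP A K δ) {S : Finset (Fin n)} (hS : #S ≤ K) {u : Fin n → ℝ}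
    (hu : ∀ i ∉ S, u i = 0) :
    (1 - δ) * (u ⬝ᵥ u) ≤ (A *ᵥ u) ⬝ᵥ (A *ᵥ u) ∧ (A *ᵥ u) ⬝ᵥ (A *ᵥ u) ≤ (1 + δ) * (u ⬝ᵥ u) := by
  simpa only [dotProduct, sq] using h u ⟨S, hS, hu⟩

theorem dotProduct_mulVec_pos (h : RIP A K δ) (hδ : δ < 1) {S : Finset (Fin n)} (hS : #S ≤ K)
    {u : Fin n → ℝ} (hu : ∀ i ∉ S, u i = 0) (hu0 : u ≠ 0) :
    0 < (A *ᵥ u) ⬝ᵥ (A *ᵥ u) := by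
  have hpos : 0 < u ⬝ᵥ u := by simpa using dotProduct_self_star_pos_iff.2 hu0
  nlinarith [(h.dotProduct_bounds hS hu).1]

-- Polarization: the lower RIP bound at `c • u + w` minus the upper one at `c • u - w`.
theorem two_mul_dotProduct_sub_le (h : RIP A K δ) {S : Finset (Fin n)} (hS : #S ≤ K)
    {u w : Fin n → ℝ} (hu : ∀ i ∉ S, u i = 0) (hw : ∀ i ∉ S, w i = 0) (c : ℝ) :
    2 * c * (u ⬝ᵥ w - (A *ᵥ u) ⬝ᵥ (A *ᵥ w)) ≤ δ * (c ^ 2 * (u ⬝ᵥ u) + w ⬝ᵥ w) := by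
  have hp := (h.dotProduct_bounds hS (u := c • u + w) (by simp_all)).1
  have hq := (h.dotProduct_bounds hS (u := c • u - w) (by simp_all)).2
  simp only [mulVec_add, mulVec_sub, mulVec_smul, add_dotProduct, dotProduct_add, sub_dotProduct,
    dotProduct_sub, smul_dotProduct, dotProduct_smul, smul_eq_mul] at hp hq
  rw [dotProduct_comm w u, dotProduct_comm (A *ᵥ w) (A *ᵥ u)] at hp hq
  nlinarith

-- Polarization at `v` and `v + τ • e j`, where `v j = 0`.
theorem two_mul_sub_correlation_le (h : RIP A K δ) {S : Finset (Fin n)} (hS : #S + 1 ≤ K)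
    {v : Fin n → ℝ} (hv : ∀ i ∉ S, v i = 0) {j : Fin n} (hj : j ∉ S) (τ c : ℝ) :
    2 * c * (v ⬝ᵥ v - (A *ᵥ v) ⬝ᵥ (A *ᵥ v) - τ * (Aᵀ *ᵥ (A *ᵥ v)) j)
      ≤ δ * (c ^ 2 * (v ⬝ᵥ v) + v ⬝ᵥ v + τ ^ 2) := by
  have hvj : v j = 0 := hv j hj
  have hS' : #(insert j S) ≤ K := (card_insert_le _ _).trans hS
  have hv' : ∀ i ∉ insert j S, v i = 0 := fun i hi => hv i (by simp_all)
  have hw : ∀ i ∉ insert j S, (v + Pi.single j τ : Fin n → ℝ) i = 0 := fun i hi => by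
    simp only [mem_insert, not_or] at hi
    simp [hv i hi.2, hi.1]
  have key := h.two_mul_dotProduct_sub_le hS' hv' hw c
  simp only [mulVec_add, dotProduct_add, add_dotProduct, dotProduct_single, single_dotProduct,
    mulVec_dotProduct_mulVec A v (Pi.single j τ), Pi.add_apply, hvj, Pi.single_eq_same, zero_mul,
    mul_zero, add_zero, zero_add] at key
  linarith

theorem argmax_correlation_mem_sdiff (h : RIP A K δ) {S Λ : Finset (Fin n)}
    (hK : #(S ∪ Λ) + 1 ≤ K) {X : ℝ} (hX : (#(S \ Λ) : ℝ) + 1 ≤ X) (hδ : δ * √X < 1)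
    {v : Fin n → ℝ} (hv : ∀ i ∉ S ∪ Λ, v i = 0) (hv0 : v ≠ 0)
    (horth : ∀ i ∈ Λ, (Aᵀ *ᵥ (A *ᵥ v)) i = 0) {j : Fin n}
    (hj : ∀ i, |(Aᵀ *ᵥ (A *ᵥ v)) i| ≤ |(Aᵀ *ᵥ (A *ᵥ v)) j|) :
    j ∈ S \ Λ := by
  set c := Aᵀ *ᵥ (A *ᵥ v)
  set L := ∑ i ∈ S \ Λ, |v i|
  have hX1 : 1 ≤ √X := Real.one_le_sqrt.2 ((le_add_of_nonneg_left (Nat.cast_nonneg _)).trans hX)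
  have hAv : 0 < (A *ᵥ v) ⬝ᵥ (A *ᵥ v) :=
    h.dotProduct_mulVec_pos (by nlinarith) (by omega) hv hv0
  have henergy : (A *ᵥ v) ⬝ᵥ (A *ᵥ v) ≤ L * |c j| :=
    calc (A *ᵥ v) ⬝ᵥ (A *ᵥ v) = ∑ i ∈ S \ Λ, v i * c i := by
          rw [mulVec_dotProduct_mulVec, dotProduct_comm]; exact dotProduct_eq_sum_sdiff hv horth
      _ ≤ ∑ i ∈ S \ Λ, |v i| * |c j| := sum_le_sum fun i _ => (le_abs_self _).trans
          (abs_mul (v i) (c i) ▸ mul_le_mul_of_nonneg_left (hj i) (abs_nonneg _))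
      _ = L * |c j| := (sum_mul _ _ _).symm
  have hβ : 0 < |c j| :=
    pos_of_mul_pos_right (hAv.trans_le henergy) (sum_nonneg fun i _ => abs_nonneg _)
  have hjΛ : j ∉ Λ := fun hjΛ => hβ.ne' (by rw [horth j hjΛ, abs_zero])
  refine mem_sdiff.2 ⟨by_contra fun hjS => ?_, hjΛ⟩
  have key :=
    h.two_mul_sub_correlation_le hK hv (j := j) (by simp [hjS, hjΛ]) (-L * c j / |c j|) √X
  have hτc : -L * c j / |c j| * c j = -(L * |c j|) := by field_simp; rw [sq_abs]
  have hτsq : (-L * c j / |c j|) ^ 2 = L ^ 2 := by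
    rw [div_pow, mul_pow, ← sq_abs (c j)]; field_simp
  rw [hτc, hτsq] at key
  have hU : 0 < v ⬝ᵥ v := by simpa using dotProduct_self_star_pos_iff.2 hv0
  have hXsq : √X ^ 2 = X := Real.sq_sqrt (by linarith)
  have hsparse : v ⬝ᵥ v + L ^ 2 ≤ √X ^ 2 * (v ⬝ᵥ v) := by
    nlinarith [sq_sum_abs_le_card_mul_dotProduct (S \ Λ) v]
  have hmain : 2 * √X * (v ⬝ᵥ v) ≤ δ * (√X ^ 2 * (v ⬝ᵥ v) + v ⬝ᵥ v + L ^ 2) := by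
    nlinarith [mul_nonneg (Real.sqrt_nonneg X) (sub_nonneg.2 henergy)]
  nlinarith [mul_pos hU (zero_lt_one.trans_le hX1)]

end RIP

-- `xe t` is the least-squares fit on `Λ t`, encoded by its support and the normal equations; the
-- index `j (t + 1)` is selected from the residual `r t`.
structure IsOMPRun {m n : ℕ} (A : Matrix (Fin m) (Fin n) ℝ) (y : Fin m → ℝ)
    (Λ : ℕ → Finset (Fin n)) (r : ℕ → Fin m → ℝ) (j : ℕ → Fin n) (xe : ℕ → Fin n → ℝ) : Prop where
  coeff_eq_zero : ∀ t, ∀ i ∉ Λ t, xe t i = 0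
  residual_eq : ∀ t, r t = y - A *ᵥ xe t
  orthogonal : ∀ t, ∀ i ∈ Λ t, (Aᵀ *ᵥ r t) i = 0
  abs_le_selected : ∀ t i, |(Aᵀ *ᵥ r t) i| ≤ |(Aᵀ *ᵥ r t) (j (t + 1))|
  index_succ : ∀ t, Λ (t + 1) = Λ t ∪ {j (t + 1)}

namespace IsOMPRun

variable {m n K k g : ℕ} {A : Matrix (Fin m) (Fin n) ℝ} {δ : ℝ} {x : Fin n → ℝ} {y : Fin m → ℝ}
  {Λ : ℕ → Finset (Fin n)} {r : ℕ → Fin m → ℝ} {j : ℕ → Fin n} {xe : ℕ → Fin n → ℝ}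
  {T T₀ : Finset (Fin n)}

theorem monotone (hrun : IsOMPRun A y Λ r j xe) : Monotone Λ :=
  monotone_nat_of_le_succ fun t => (hrun.index_succ t).symm ▸ subset_union_left

theorem residual_eq_mulVec_sub (hrun : IsOMPRun A y Λ r j xe) (hy : y = A *ᵥ x) (t : ℕ) :
    r t = A *ᵥ (x - xe t) := by
  rw [hrun.residual_eq, hy, mulVec_sub]

theorem succ_mem_sdiff (hrun : IsOMPRun A y Λ r j xe) (h : RIP A K δ) (hy : y = A *ᵥ x)
    (hT : ∀ i, x i ≠ 0 ↔ i ∈ T) {t : ℕ} (hK : #(T ∪ Λ t) + 1 ≤ K) {X : ℝ}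
    (hX : (#(T \ Λ t) : ℝ) + 1 ≤ X) (hδ : δ * √X < 1) (hsub : ¬T ⊆ Λ t) :
    j (t + 1) ∈ T \ Λ t := by
  have hx : ∀ i ∉ T, x i = 0 := fun i hi => not_not.1 (mt (hT i).1 hi)
  obtain ⟨i₀, hi₀T, hi₀Λ⟩ := not_subset.1 hsub
  refine h.argmax_correlation_mem_sdiff hK hX hδ (v := x - xe t) (fun i hi => ?_) (fun h0 => ?_)
    (fun i hi => ?_) (fun i => ?_)
  · simp only [mem_union, not_or] at hi
    simp [hx i hi.1, hrun.coeff_eq_zero t i hi.2]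
  · have := congrFun h0 i₀
    simp only [Pi.sub_apply, hrun.coeff_eq_zero t i₀ hi₀Λ, sub_zero, Pi.zero_apply] at this
    exact (hT i₀).2 hi₀T this
  · rw [← hrun.residual_eq_mulVec_sub hy]; exact hrun.orthogonal t i hi
  · rw [← hrun.residual_eq_mulVec_sub hy]; exact hrun.abs_le_selected t i

theorem eq_of_subset (hrun : IsOMPRun A y Λ r j xe) (h : RIP A K δ) (hδ : δ < 1)
    (hy : y = A *ᵥ x) {t : ℕ} (hK : #(Λ t) ≤ K) (hx : ∀ i ∉ Λ t, x i = 0) : xe t = x := by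
  have hv : ∀ i ∉ Λ t, (x - xe t) i = 0 := fun i hi => by
    simp [hx i hi, hrun.coeff_eq_zero t i hi]
  have horth : ∀ i ∈ Λ t, (Aᵀ *ᵥ (A *ᵥ (x - xe t))) i = 0 := fun i hi => by
    rw [← hrun.residual_eq_mulVec_sub hy]; exact hrun.orthogonal t i hi
  have hzero : (A *ᵥ (x - xe t)) ⬝ᵥ (A *ᵥ (x - xe t)) = 0 := by
    rw [mulVec_dotProduct_mulVec, dotProduct_comm,
      dotProduct_eq_sum_sdiff (S := ∅) (by simpa using hv) horth, empty_sdiff, sum_empty]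
  by_contra hne
  exact (h.dotProduct_mulVec_pos hδ hK hv (sub_ne_zero.2 (Ne.symm hne))).ne' hzero

theorem succ_mem_sdiff_of_card_inter (hrun : IsOMPRun A y Λ r j xe) (h : RIP A K δ)
    (hy : y = A *ᵥ x) (hT : ∀ i, x i ≠ 0 ↔ i ∈ T) (hTcard : #T = k) (hK : #(T ∪ T₀) + 1 ≤ K)
    (hδ : δ * √((k : ℝ) - g + 1) < 1) {t : ℕ} (hΛt : Λ t ⊆ T ∪ T₀) (hcard : #(T ∩ Λ t) = g + t)
    (ht : t < k - g) : j (t + 1) ∈ T \ Λ t := by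
  have hsplit := card_sdiff_add_card_inter T (Λ t)
  have hK' : #(T ∪ Λ t) + 1 ≤ K :=
    (Nat.add_le_add_right (card_le_card (union_subset subset_union_left hΛt)) 1).trans hK
  have hX : (#(T \ Λ t) : ℝ) + 1 ≤ (k : ℝ) - g + 1 := by
    have : #(T \ Λ t) + g ≤ k := by omega
    have : (#(T \ Λ t) : ℝ) + g ≤ k := by exact_mod_cast this
    linarith
  have hsub : ¬T ⊆ Λ t := fun hsub => by
    rw [inter_eq_left.2 hsub] at hcard
    omega
  exact hrun.succ_mem_sdiff h hy hT hK' hX hδ hsub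

theorem subset_and_card_inter (hrun : IsOMPRun A y Λ r j xe) (h : RIP A K δ)
    (hy : y = A *ᵥ x) (hT : ∀ i, x i ≠ 0 ↔ i ∈ T) (hTcard : #T = k) (hK : #(T ∪ T₀) + 1 ≤ K)
    (hδ : δ * √((k : ℝ) - g + 1) < 1) (hcap : #(T ∩ T₀) = g) (hΛ0 : Λ 0 = T₀) :
    ∀ t ≤ k - g, Λ t ⊆ T ∪ T₀ ∧ #(T ∩ Λ t) = g + t := by
  intro t
  induction t with
  | zero => exact fun _ => ⟨hΛ0 ▸ subset_union_right, by rw [hΛ0, hcap, add_zero]⟩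
  | succ t ih =>
    intro ht
    obtain ⟨hΛt, hcard⟩ := ih (by omega)
    obtain ⟨hjT, hjΛ⟩ := mem_sdiff.1
      (hrun.succ_mem_sdiff_of_card_inter h hy hT hTcard hK hδ hΛt hcard (by omega))
    rw [hrun.index_succ t, union_singleton, inter_insert_of_mem hjT,
      card_insert_of_notMem (fun hj => hjΛ (mem_inter.1 hj).2), hcard]
    exact ⟨insert_subset (mem_union_left _ hjT) hΛt, rfl⟩

end IsOMPRun

theorem stmt5_general (m n k g b : ℕ)
    (A : Matrix (Fin m) (Fin n) ℝ) (δ : ℝ) (hRIP : RIP A (k + b + 1) δ)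
    (hδ : δ < 1 / Real.sqrt ((k : ℝ) - g + 1))
    (x : Fin n → ℝ) (T T₀ : Finset (Fin n))
    (hT : ∀ i, x i ≠ 0 ↔ i ∈ T) (hTcard : T.card = k)
    (hcap : (T ∩ T₀).card = g) (hbcard : (T₀ \ T).card = b)
    (y : Fin m → ℝ) (hy : y = A.mulVec x)
    (Λ : ℕ → Finset (Fin n)) (r : ℕ → Fin m → ℝ) (j : ℕ → Fin n)
    (xe : ℕ → Fin n → ℝ)
    (hΛ0 : Λ 0 = T₀)
    (hxe : ∀ t, (∀ i, i ∉ Λ t → xe t i = 0) ∧ r t = y - A.mulVec (xe t) ∧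
      (∀ i ∈ Λ t, (∑ l, A l i * r t l) = 0))
    (hj : ∀ t, 1 ≤ t → ∀ i, |∑ l, A l i * r (t - 1) l| ≤ |∑ l, A l (j t) * r (t - 1) l|)
    (hΛ : ∀ t, 1 ≤ t → Λ t = Λ (t - 1) ∪ {j t}) :
    (∀ t, 1 ≤ t → t ≤ k - g → j t ∈ T \ T₀) ∧ xe (k - g) = x := by
  have hrun : IsOMPRun A y Λ r j xe :=
    ⟨fun t => (hxe t).1, fun t => (hxe t).2.1, fun t => (hxe t).2.2,
      fun t => hj (t + 1) t.succ_pos, fun t => hΛ (t + 1) t.succ_pos⟩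
  have hK : #(T ∪ T₀) + 1 ≤ k + b + 1 := by
    rw [← union_sdiff_self_eq_union, card_union_of_disjoint disjoint_sdiff, hTcard, hbcard]
  have hgk : g ≤ k := hcap ▸ hTcard ▸ card_le_card inter_subset_left
  have hX1 : 1 ≤ √((k : ℝ) - g + 1) :=
    Real.one_le_sqrt.2 (by linarith [(Nat.cast_le (α := ℝ)).2 hgk])
  have hδ' : δ * √((k : ℝ) - g + 1) < 1 := (lt_div_iff₀ (by linarith)).1 hδ
  have hinv := hrun.subset_and_card_inter hRIP hy hT hTcard hK hδ' hcap hΛ0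
  refine ⟨fun t ht1 htk => ?_, ?_⟩
  · obtain ⟨s, rfl⟩ : ∃ s, t = s + 1 := ⟨t - 1, by omega⟩
    obtain ⟨hΛs, hcard⟩ := hinv s (by omega)
    have hmem := hrun.succ_mem_sdiff_of_card_inter hRIP hy hT hTcard hK hδ' hΛs hcard (by omega)
    exact sdiff_subset_sdiff subset_rfl (hΛ0 ▸ hrun.monotone (Nat.zero_le s)) hmem
  · obtain ⟨hΛsub, hcard⟩ := hinv (k - g) le_rfl
    have hTΛ : T ⊆ Λ (k - g) :=
      inter_eq_left.1 (eq_of_subset_of_card_le inter_subset_left (by omega))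
    refine hrun.eq_of_subset hRIP (by nlinarith) hy ((card_le_card hΛsub).trans (by omega)) ?_
    exact fun i hi => not_not.1 (mt (hT i).1 (mt (@hTΛ i) hi))

/-- Noiseless exact recovery: if `δ_{k+b+1} < 1/√(k−g+1)` then OMP initialized with
`Λ₀ = T₀` selects only indices of `T \ T₀` during its first `k−g` iterations applied to
`y = Ax`, and after `k−g` iterations exactly recovers `x`.  The iterates are described by
the sequences `Λ` (index sets), `xe` (least–squares coefficient vectors, characterized by
support and normal equations), `r` (residuals) and `j` (selected indices, maximizing the
correlation with the residual). -/
theorem stmt5 (m n k g b : ℕ) (hg : g < k)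
    (A : Matrix (Fin m) (Fin n) ℝ) (δ : ℝ) (hRIP : RIP A (k + b + 1) δ)
    (hδ : δ < 1 / Real.sqrt ((k : ℝ) - g + 1))
    (x : Fin n → ℝ) (T T₀ : Finset (Fin n))
    (hT : ∀ i, x i ≠ 0 ↔ i ∈ T) (hTcard : T.card = k)
    (hcap : (T ∩ T₀).card = g) (hbcard : (T₀ \ T).card = b)
    (y : Fin m → ℝ) (hy : y = A.mulVec x)
    (Λ : ℕ → Finset (Fin n)) (r : ℕ → Fin m → ℝ) (j : ℕ → Fin n)
    (xe : ℕ → Fin n → ℝ)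
    (hΛ0 : Λ 0 = T₀)
    (hxe : ∀ t, (∀ i, i ∉ Λ t → xe t i = 0) ∧ r t = y - A.mulVec (xe t) ∧
      (∀ i ∈ Λ t, (∑ l, A l i * r t l) = 0))
    (hj : ∀ t, 1 ≤ t → ∀ i, |∑ l, A l i * r (t - 1) l| ≤ |∑ l, A l (j t) * r (t - 1) l|)
    (hΛ : ∀ t, 1 ≤ t → Λ t = Λ (t - 1) ∪ {j t}) :
    (∀ t, 1 ≤ t → t ≤ k - g → j t ∈ T \ T₀) ∧ xe (k - g) = x :=
  stmt5_general m n k g b A δ hRIP hδ x T T₀ hT hTcard hcap hbcard y hy Λ r j xe hΛ0 hxe hj hΛ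
end

section
/- If the OMP_{T₀} algorithm selects indices only from T\T₀ in each of the first k−g iterations applied to y = Ax + v (so Λ_{k−g} = T∪T₀), then the residual satisfies ‖r^{k−g}‖₂ = ‖P⊥_{Λ_{k−g}} v‖₂ ≤ ‖v‖₂; and for 0 ≤ t < k−g, if A satisfies the RIP of order k+b+1 with constant δ, then ‖r^t‖₂ ≥ √(1−δ)·min_{i∈T\T₀}|x_i| − ‖v‖₂. -/
/-!
Writing `y = A x + v`, the residual `r = y - A w` becomes `r = A (x - w) + v`.

Once `Λ = T ∪ T₀`, the vector `x - w` is supported on `Λ`, so `v = r + A (w - x)` with the two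
summands orthogonal, and Pythagoras gives `‖r‖ ≤ ‖v‖`.

While `|Λ \ T₀| < k - g = |T \ T₀|`, some `i₀ ∈ T \ T₀` is missing from `Λ`, so
`(x - w) i₀ = x i₀`. Since `x - w` is supported on `T ∪ T₀`, of size `k + b`, the RIP gives
`‖A (x - w)‖ ≥ √(1 - δ) ‖x - w‖ ≥ √(1 - δ) |x i₀|`, and the triangle inequality subtracts `‖v‖`.
-/

open scoped BigOperators

open Finset Matrix

section SumSq

variable {ι κ : Type*} [Fintype ι] [Fintype κ]

lemma sqrt_sum_sq_sub_sqrt_sum_sq_le (a b : ι → ℝ) :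
    √(∑ i, a i ^ 2) - √(∑ i, b i ^ 2) ≤ √(∑ i, (a + b) i ^ 2) := by
  have hnorm (f : ι → ℝ) : √(∑ i, f i ^ 2) = ‖WithLp.toLp 2 f‖ := by
    simp [EuclideanSpace.norm_eq, Real.norm_eq_abs, sq_abs]
  rw [hnorm, hnorm, hnorm, sub_le_iff_le_add]
  simpa using norm_sub_le (WithLp.toLp 2 (a + b)) (WithLp.toLp 2 b)

lemma sqrt_sum_sq_le_sqrt_sum_sq_add {r s : ι → ℝ} (h : r ⬝ᵥ s = 0) :
    √(∑ i, r i ^ 2) ≤ √(∑ i, (r + s) i ^ 2) := by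
  have hpyth : ∑ i, (r + s) i ^ 2 = ∑ i, r i ^ 2 + ∑ i, s i ^ 2 := by
    have hexpand (i : ι) : (r + s) i ^ 2 = r i ^ 2 + s i ^ 2 + 2 * (r i * s i) := by
      rw [Pi.add_apply]; ring
    rw [sum_congr rfl fun i _ => hexpand i, sum_add_distrib, sum_add_distrib, ← mul_sum]
    simp only [dotProduct] at h
    rw [h, mul_zero, add_zero]
  rw [hpyth]
  exact Real.sqrt_le_sqrt (le_add_of_nonneg_right (sum_nonneg fun i _ => sq_nonneg _))

lemma abs_le_sqrt_sum_sq (z : ι → ℝ) (i : ι) : |z i| ≤ √(∑ j, z j ^ 2) :=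
  Real.abs_le_sqrt (single_le_sum (fun j _ => sq_nonneg (z j)) (mem_univ i))

lemma dotProduct_mulVec_eq_zero {A : Matrix κ ι ℝ} {r : κ → ℝ} {u : ι → ℝ} {Λ : Finset ι}
    (horth : ∀ i ∈ Λ, ∑ l, A l i * r l = 0) (hu : ∀ i ∉ Λ, u i = 0) :
    r ⬝ᵥ A *ᵥ u = 0 := by
  rw [dotProduct_mulVec]
  refine sum_eq_zero fun i _ => ?_
  by_cases hi : i ∈ Λ
  · simp only [vecMul, dotProduct, mul_comm (r _), horth i hi, zero_mul]
  · rw [hu i hi, mul_zero]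

end SumSq

lemma RIP.sqrt_one_sub_mul_le {m n s : ℕ} {A : Matrix (Fin m) (Fin n) ℝ} {δ : ℝ}
    (hA : RIP A s δ) {z : Fin n → ℝ} {S : Finset (Fin n)} (hS : S.card ≤ s)
    (hz : ∀ i ∉ S, z i = 0) :
    √(1 - δ) * √(∑ i, z i ^ 2) ≤ √(∑ i, (A *ᵥ z) i ^ 2) := by
  rw [← Real.sqrt_mul' _ (sum_nonneg fun i _ => sq_nonneg (z i))]
  exact Real.sqrt_le_sqrt (hA z ⟨S, hS, hz⟩).1

theorem stmt19_general (m n k g b : ℕ)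
    (A : Matrix (Fin m) (Fin n) ℝ) (δ : ℝ) (hRIP : RIP A (k + b + 1) δ)
    (x : Fin n → ℝ) (v : Fin m → ℝ) (T T₀ : Finset (Fin n))
    (hT : ∀ i, x i ≠ 0 ↔ i ∈ T) (hTcard : T.card = k)
    (hcap : (T ∩ T₀).card = g) (hbcard : (T₀ \ T).card = b)
    (hne : (T \ T₀).Nonempty)
    (y : Fin m → ℝ) (hy : y = A.mulVec x + v)
    (Λ : Finset (Fin n)) (hΛ2 : Λ \ T₀ ⊆ T \ T₀)
    (r : Fin m → ℝ)
    (hr : ∃ w : Fin n → ℝ, (∀ i ∉ Λ, w i = 0) ∧ r = y - A.mulVec w ∧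
      ∀ i ∈ Λ, (∑ l, A l i * r l) = 0) :
    (Λ = T ∪ T₀ →
      (∃ w' : Fin n → ℝ, (∀ i ∉ Λ, w' i = 0) ∧ r = v - A.mulVec w') ∧
      Real.sqrt (∑ i, r i ^ 2) ≤ Real.sqrt (∑ i, v i ^ 2)) ∧
    ((Λ \ T₀).card < k - g →
      Real.sqrt (∑ i, r i ^ 2) ≥
        Real.sqrt (1 - δ) * ((T \ T₀).inf' hne fun i => |x i|) -
          Real.sqrt (∑ i, v i ^ 2)) := by
  obtain ⟨w, hw, hrw, horth⟩ := hr
  have hx : ∀ i ∉ T, x i = 0 := fun i hi => not_not.mp (mt (hT i).mp hi)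
  have hr_eq : r = A *ᵥ (x - w) + v := by rw [hrw, hy, mulVec_sub]; abel
  refine ⟨fun hΛ => ?_, fun hcard => ?_⟩
  · have hsupp : ∀ i ∉ Λ, (w - x) i = 0 := fun i hi => by
      simp [hw i hi, hx i fun hiT => hi (hΛ ▸ mem_union_left _ hiT)]
    have hv : v = r + A *ᵥ (w - x) := by rw [hr_eq, mulVec_sub, mulVec_sub]; abel
    refine ⟨⟨w - x, hsupp, by rw [hv]; abel⟩, ?_⟩
    rw [hv]
    exact sqrt_sum_sq_le_sqrt_sum_sq_add (dotProduct_mulVec_eq_zero horth hsupp)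
  · have hcardT : (T \ T₀).card = k - g := by
      have := card_sdiff_add_card_inter T T₀
      omega
    obtain ⟨i₀, hi₀, hi₀Λ'⟩ := exists_mem_notMem_of_card_lt_card (hcardT ▸ hcard)
    have hi₀Λ : i₀ ∉ Λ := fun h => hi₀Λ' (mem_sdiff.mpr ⟨h, (mem_sdiff.mp hi₀).2⟩)
    have hΛT : Λ ⊆ T₀ ∪ T := sdiff_le_iff.mp (hΛ2.trans sdiff_subset)
    have hsupp : ∀ i ∉ T₀ ∪ T, (x - w) i = 0 := fun i hi => by
      simp [hw i fun h => hi (hΛT h), hx i fun h => hi (mem_union_right _ h)]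
    have hcard_union : (T₀ ∪ T).card ≤ k + b + 1 := by
      have := card_sdiff_add_card T₀ T
      omega
    have hmin : (T \ T₀).inf' hne (fun i => |x i|) ≤ √(∑ i, (x - w) i ^ 2) := by
      refine (inf'_le _ hi₀).trans ?_
      simpa [hw i₀ hi₀Λ] using abs_le_sqrt_sum_sq (x - w) i₀
    calc √(1 - δ) * (T \ T₀).inf' hne (fun i => |x i|) - √(∑ i, v i ^ 2)
        ≤ √(1 - δ) * √(∑ i, (x - w) i ^ 2) - √(∑ i, v i ^ 2) := by gcongr
      _ ≤ √(∑ i, (A *ᵥ (x - w)) i ^ 2) - √(∑ i, v i ^ 2) := by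
          gcongr; exact hRIP.sqrt_one_sub_mul_le hcard_union hsupp
      _ ≤ √(∑ i, r i ^ 2) := by
          rw [hr_eq]; exact sqrt_sum_sq_sub_sqrt_sum_sq_le _ _

/-- If OMP selects only indices from `T\T₀` in the first `k−g` iterations
(`Λ_t = T₀ ∪ {j₁,…,j_t}` with the `j`'s in `T\T₀`), then: when `Λ = T∪T₀` the residual
equals `P⊥_Λ v` and `‖r^{k−g}‖₂ ≤ ‖v‖₂`; and for `t < k−g`, if `A` satisfies the RIP of
order `k+b+1` with constant `δ`, then `‖rᵗ‖₂ ≥ √(1−δ)·min_{i∈T\T₀}|x_i| − ‖v‖₂`.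
The residual `r` at step with index set `Λ` is characterized by `r = y − A w`,
`w` supported on `Λ`, and orthogonality of `r` to the columns of `A` in `Λ`. -/
theorem stmt19 (m n k g b : ℕ) (hg : g < k)
    (A : Matrix (Fin m) (Fin n) ℝ) (δ : ℝ) (hRIP : RIP A (k + b + 1) δ)
    (x : Fin n → ℝ) (v : Fin m → ℝ) (T T₀ : Finset (Fin n))
    (hT : ∀ i, x i ≠ 0 ↔ i ∈ T) (hTcard : T.card = k)
    (hcap : (T ∩ T₀).card = g) (hbcard : (T₀ \ T).card = b)
    (hne : (T \ T₀).Nonempty)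
    (y : Fin m → ℝ) (hy : y = A.mulVec x + v)
    (Λ : Finset (Fin n)) (hΛ1 : T₀ ⊆ Λ) (hΛ2 : Λ \ T₀ ⊆ T \ T₀)
    (r : Fin m → ℝ)
    (hr : ∃ w : Fin n → ℝ, (∀ i ∉ Λ, w i = 0) ∧ r = y - A.mulVec w ∧
      ∀ i ∈ Λ, (∑ l, A l i * r l) = 0) :
    (Λ = T ∪ T₀ →
      (∃ w' : Fin n → ℝ, (∀ i ∉ Λ, w' i = 0) ∧ r = v - A.mulVec w') ∧
      Real.sqrt (∑ i, r i ^ 2) ≤ Real.sqrt (∑ i, v i ^ 2)) ∧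
    ((Λ \ T₀).card < k - g →
      Real.sqrt (∑ i, r i ^ 2) ≥
        Real.sqrt (1 - δ) * ((T \ T₀).inf' hne fun i => |x i|) -
          Real.sqrt (∑ i, v i ^ 2)) :=
  stmt19_general m n k g b A δ hRIP x v T T₀ hT hTcard hcap hbcard hne y hy Λ hΛ2 r hr
end
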